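/- arXiv:1902.02726 — 7 statements merged into one kernel-verified Lean document; each statement's English description precedes it below -/
import Mathlib

section
/- Let K ⊆ ℝ^m (with the Euclidean inner product and norm) be a nonempty closed convex cone, let y ∈ ℝ^m, and let s ≥ 0. Then the supremum of ⟨y, u⟩ over all u ∈ K with ‖u‖₂ ≤ s equals s·‖proj_K(y)‖₂, and this supremum is attained. -/
open scoped RealInnerProductSpace

/-- **Supremum of a linear functional over a norm-bounded cone section.** Let
`K ⊆ ℝ^m` be a nonempty closed convex cone, `y ∈ ℝ^m`, `s ≥ 0`, and let `p` be the
metric projection of `y` onto `K`. Then the supremum of `⟪y, u⟫` over `u ∈ K` with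
`‖u‖ ≤ s` is attained and equals `s * ‖p‖`. -/
theorem sup_inner_cone_ball_eq_proj_norm {m : ℕ}
    (K : Set (EuclideanSpace ℝ (Fin m)))
    (hne : K.Nonempty) (hclosed : IsClosed K) (hconv : Convex ℝ K)
    (hcone : ∀ c : ℝ, 0 ≤ c → ∀ u ∈ K, c • u ∈ K)
    (y : EuclideanSpace ℝ (Fin m)) (s : ℝ) (hs : 0 ≤ s)
    (p : EuclideanSpace ℝ (Fin m)) (hpK : p ∈ K)
    (hproj : ∀ z ∈ K, dist y p ≤ dist y z) :
    IsGreatest {r : ℝ | ∃ u ∈ K, ‖u‖ ≤ s ∧ r = ⟪y, u⟫} (s * ‖p‖) := by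
  haveI : Nonempty K := hne.to_subtype
  -- variational inequality
  have hinf : ‖y - p‖ = ⨅ w : K, ‖y - w‖ := by
    apply le_antisymm
    · exact le_ciInf fun w => by
        simpa [dist_eq_norm] using hproj w w.2
    · exact ciInf_le ⟨0, fun x ⟨w, hw⟩ => hw ▸ norm_nonneg _⟩ (⟨p, hpK⟩ : K)
  have hvar : ∀ w ∈ K, ⟪y - p, w - p⟫ ≤ 0 :=
    (norm_eq_iInf_iff_real_inner_le_zero hconv hpK).mp hinf
  have h0K : (0 : EuclideanSpace ℝ (Fin m)) ∈ K := by
    simpa using hcone 0 le_rfl p hpK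
  have h2K : (2 : ℝ) • p ∈ K := hcone 2 (by norm_num) p hpK
  have hle : ⟪y - p, p⟫ ≤ 0 := by
    have := hvar _ h2K
    have h2 : (2 : ℝ) • p - p = p := by
      rw [two_smul]; abel
    rwa [h2] at this
  have hge : 0 ≤ ⟪y - p, p⟫ := by
    have := hvar _ h0K
    rw [zero_sub, inner_neg_right] at this
    linarith
  have hzero : ⟪y - p, p⟫ = 0 := le_antisymm hle hge
  have hyp : ⟪y, p⟫ = ‖p‖ ^ 2 := by
    have := hzero
    rw [inner_sub_left] at this
    rw [← real_inner_self_eq_norm_sq]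
    linarith
  constructor
  · -- membership: attained
    by_cases hp : p = 0
    · refine ⟨0, h0K, by simp [hs], ?_⟩
      simp [hp]
    · have hpn : (0:ℝ) < ‖p‖ := norm_pos_iff.mpr hp
      refine ⟨(s / ‖p‖) • p, hcone _ (div_nonneg hs hpn.le) p hpK, ?_, ?_⟩
      · rw [norm_smul, Real.norm_eq_abs, abs_of_nonneg (div_nonneg hs hpn.le)]
        rw [div_mul_cancel₀ _ hpn.ne']
      · rw [real_inner_smul_right, hyp]
        field_simp
  · -- upper bound
    rintro r ⟨u, huK, hus, rfl⟩
    have h1 : ⟪y - p, u⟫ ≤ 0 := by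
      have := hvar u huK
      rw [inner_sub_right] at this
      linarith
    have h2 : ⟪y, u⟫ ≤ ⟪p, u⟫ := by
      have : ⟪y, u⟫ - ⟪p, u⟫ ≤ 0 := by rwa [← inner_sub_left]
      linarith
    have h3 : ⟪p, u⟫ ≤ ‖p‖ * ‖u‖ := real_inner_le_norm p u
    have h4 : ‖p‖ * ‖u‖ ≤ ‖p‖ * s := by
      exact mul_le_mul_of_nonneg_left hus (norm_nonneg p)
    nlinarith
end

section
/- Let K ⊆ ℝ^m (with the Euclidean inner product and norm) be a nonempty closed convex cone, let y ∈ ℝ^m with proj_K(y) ≠ 0, and let s > 0. Then the function u ↦ ⟨y, u⟩ attains its maximum over {u ∈ K : ‖u‖₂ ≤ s} at the unique point u* = (s/‖proj_K(y)‖₂)·proj_K(y); in particular every maximizer satisfies ‖u*‖₂ = s. -/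
open scoped RealInnerProductSpace

/-- **Unique maximizer of a linear functional over a norm-bounded cone section.** Let
`K ⊆ ℝ^m` be a nonempty closed convex cone, `y ∈ ℝ^m`, and let `p` be the metric
projection of `y` onto `K`, with `p ≠ 0`, and let `s > 0`. Then `u* = (s/‖p‖) • p` lies
in `{u ∈ K : ‖u‖ ≤ s}`, maximizes `u ↦ ⟪y, u⟫` over that set, is the unique such
maximizer, and has norm exactly `s`. -/
theorem inner_max_on_cone_ball_unique {m : ℕ}
    (K : Set (EuclideanSpace ℝ (Fin m)))
    (hne : K.Nonempty) (hclosed : IsClosed K) (hconv : Convex ℝ K)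
    (hcone : ∀ c : ℝ, 0 ≤ c → ∀ u ∈ K, c • u ∈ K)
    (y : EuclideanSpace ℝ (Fin m))
    (p : EuclideanSpace ℝ (Fin m)) (hpK : p ∈ K)
    (hproj : ∀ z ∈ K, dist y p ≤ dist y z) (hp : p ≠ 0)
    (s : ℝ) (hs : 0 < s) :
    ((s / ‖p‖) • p ∈ K ∧ ‖(s / ‖p‖) • p‖ ≤ s) ∧
    ‖(s / ‖p‖) • p‖ = s ∧
    (∀ u ∈ K, ‖u‖ ≤ s → ⟪y, u⟫ ≤ ⟪y, (s / ‖p‖) • p⟫) ∧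
    (∀ u ∈ K, ‖u‖ ≤ s → ⟪y, u⟫ = ⟪y, (s / ‖p‖) • p⟫ → u = (s / ‖p‖) • p) := by
  have hpn : (0:ℝ) < ‖p‖ := norm_pos_iff.mpr hp
  have hc : (0:ℝ) ≤ s / ‖p‖ := le_of_lt (div_pos hs hpn)
  -- variational inequality
  have hiInf : ‖y - p‖ = ⨅ w : K, ‖y - w‖ := by
    haveI : Nonempty K := ⟨⟨p, hpK⟩⟩
    refine le_antisymm (le_ciInf fun w => ?_) ?_
    · simpa [dist_eq_norm] using hproj w w.2
    · exact ciInf_le ⟨0, fun _ ⟨_, h⟩ => h ▸ norm_nonneg _⟩ (⟨p, hpK⟩ : K)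
  have hvar : ∀ w ∈ K, ⟪y - p, w - p⟫ ≤ 0 :=
    (norm_eq_iInf_iff_real_inner_le_zero hconv hpK).mp hiInf
  -- ⟪y - p, p⟫ = 0
  have h0K : (0:EuclideanSpace ℝ (Fin m)) ∈ K := by
    simpa using hcone 0 le_rfl p hpK
  have h2p : (2:ℝ) • p ∈ K := hcone 2 (by norm_num) p hpK
  have e1 : ⟪y - p, p⟫ ≤ 0 := by
    have := hvar ((2:ℝ) • p) h2p
    have h2 : (2:ℝ) • p - p = p := by
      rw [two_smul]; abel
    rwa [h2] at this
  have e2 : (0:ℝ) ≤ ⟪y - p, p⟫ := by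
    have := hvar 0 h0K
    rw [zero_sub, inner_neg_right] at this
    linarith
  have hyp : ⟪y - p, p⟫ = 0 := le_antisymm e1 e2
  -- ⟪y - p, w⟫ ≤ 0 for all w ∈ K
  have hle : ∀ w ∈ K, ⟪y - p, w⟫ ≤ 0 := fun w hw => by
    have := hvar w hw
    rw [inner_sub_right, hyp] at this
    linarith
  have hyp' : ⟪y, p⟫ = ‖p‖ ^ 2 := by
    have := hyp
    rw [inner_sub_left, real_inner_self_eq_norm_sq] at this
    linarith
  have hustar : ⟪y, (s / ‖p‖) • p⟫ = s * ‖p‖ := by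
    rw [real_inner_smul_right, hyp']
    field_simp
  have hnorm : ‖(s / ‖p‖) • p‖ = s := by
    rw [norm_smul, Real.norm_eq_abs, abs_of_nonneg hc]
    field_simp
  have hmax : ∀ u ∈ K, ‖u‖ ≤ s → ⟪y, u⟫ ≤ ⟪y, (s / ‖p‖) • p⟫ := by
    intro u hu hun
    rw [hustar]
    have h1 : ⟪y, u⟫ ≤ ⟪p, u⟫ := by
      have := hle u hu
      rw [inner_sub_left] at this
      linarith
    have h2 : ⟪p, u⟫ ≤ ‖p‖ * ‖u‖ := real_inner_le_norm p u
    have h3 : ‖p‖ * ‖u‖ ≤ ‖p‖ * s := by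
      exact mul_le_mul_of_nonneg_left hun (le_of_lt hpn)
    nlinarith
  refine ⟨⟨hcone _ hc p hpK, hnorm.le⟩, hnorm, hmax, ?_⟩
  intro u hu hun heq
  rw [hustar] at heq
  have h1 : ⟪y, u⟫ ≤ ⟪p, u⟫ := by
    have := hle u hu
    rw [inner_sub_left] at this
    linarith
  have h2 : ⟪p, u⟫ ≤ ‖p‖ * ‖u‖ := real_inner_le_norm p u
  have h3 : ‖p‖ * ‖u‖ ≤ ‖p‖ * s := mul_le_mul_of_nonneg_left hun (le_of_lt hpn)
  have hus : ‖u‖ = s := by nlinarith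
  have hcs : ⟪p, u⟫ = ‖p‖ * ‖u‖ := by nlinarith
  have := inner_eq_norm_mul_iff_real.mp hcs
  -- ‖u‖ • p = ‖p‖ • u
  have : u = (s / ‖p‖) • p := by
    have h := this
    rw [hus] at h
    have : (‖p‖⁻¹ : ℝ) • (s • p) = (‖p‖⁻¹ : ℝ) • (‖p‖ • u) := by rw [h]
    rw [smul_smul, smul_smul, inv_mul_cancel₀ (ne_of_gt hpn), one_smul] at this
    rw [← this, div_eq_mul_inv, mul_comm, mul_smul]
  exact this
end

section
/- Let C ∈ ℝ^{p×m} and let U = {u ∈ ℝ^m : Cu ≤ 0 componentwise}. Then the polar cone of U equals the finitely generated cone {Cᵀλ : λ ∈ ℝ^p, λ ≥ 0 componentwise}; in particular this finitely generated cone is closed. -/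
open Matrix
open scoped RealInnerProductSpace

/-- Identify a plain vector of `ℝ^m` with a point of Euclidean space. -/
noncomputable def toE {m : ℕ} (v : Fin m → ℝ) : EuclideanSpace ℝ (Fin m) := WithLp.toLp 2 v

/-!
The polar of `U = {u : Cu ≤ 0}` is the double inner dual of the rows of `C`, so by the
bipolar theorem it is the closure of the cone `K` they generate. It remains to see that `K`
is closed. If the generators are linearly independent, `K` is the image of the closed orthant
under an injective linear map with finite-dimensional domain, a closed embedding. Otherwise a
linear dependence with a positive coefficient lets one shift the coefficients of any point of
`K` until one of them vanishes (conic Carathéodory), so `K` is the finite union of the cones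
generated by fewer vectors, which are closed by induction.
-/

open Set

/-- Ratio test: `t` is the least ratio `c i / g i` over the `i ∈ s` with `0 < g i`. -/
lemma Finset.exists_nonneg_sub_mul_eq_zero {𝕜 ι : Type*} [Field 𝕜] [LinearOrder 𝕜]
    [IsStrictOrderedRing 𝕜] {s : Finset ι} {c g : ι → 𝕜}
    (hc : ∀ i ∈ s, 0 ≤ c i) (hg : ∃ i ∈ s, 0 < g i) :
    ∃ t : 𝕜, ∃ i₀ ∈ s, (∀ i ∈ s, 0 ≤ c i - t * g i) ∧ c i₀ - t * g i₀ = 0 := by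
  obtain ⟨i₀, hi₀, hmin⟩ := (s.filter fun i => 0 < g i).exists_min_image (fun i => c i / g i)
    (by simpa [Finset.Nonempty] using hg)
  rw [Finset.mem_filter] at hi₀
  refine ⟨c i₀ / g i₀, i₀, hi₀.1, fun i hi => ?_, by field_simp [hi₀.2.ne']; ring⟩
  rcases lt_or_ge 0 (g i) with hgi | hgi
  · have := hmin i (Finset.mem_filter.2 ⟨hi, hgi⟩)
    rw [le_div_iff₀ hgi] at this
    linarith
  · have : 0 ≤ c i₀ / g i₀ := div_nonneg (hc i₀ hi₀.1) hi₀.2.le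
    nlinarith [hc i hi]

lemma exists_pos_of_not_linearIndepOn {R E : Type*} [Ring R] [LinearOrder R]
    [IsOrderedRing R] [AddCommGroup E] [Module R E] {s : Finset E}
    (hs : ¬LinearIndepOn R id (s : Set E)) :
    ∃ g : E → R, ∑ y ∈ s, g y • y = 0 ∧ ∃ y ∈ s, 0 < g y := by
  obtain ⟨g, hg, y, hy, hgy⟩ := not_linearIndepOn_finset_iff.1 hs
  rcases hgy.lt_or_gt with hneg | hpos
  · exact ⟨-g, by simpa using hg, y, hy, by simpa using hneg⟩
  · exact ⟨g, hg, y, hy, hpos⟩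

namespace PointedCone

section OrderedSemiring

variable {R E ι : Type*} [Semiring R] [PartialOrder R] [IsOrderedRing R] [AddCommMonoid E]
  [Module R E]

lemma mem_hull_range_iff [Fintype ι] {v : ι → E} {x : E} :
    x ∈ hull R (range v) ↔ ∃ c : ι → R, 0 ≤ c ∧ ∑ i, c i • v i = x := by
  rw [Submodule.mem_span_range_iff_exists_fun]
  constructor
  · rintro ⟨c, rfl⟩
    exact ⟨fun i => c i, fun i => (c i).2, rfl⟩
  · rintro ⟨c, hc, rfl⟩
    exact ⟨fun i => ⟨c i, hc i⟩, rfl⟩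

lemma mem_hull_finset_iff {s : Finset E} {x : E} :
    x ∈ hull R (s : Set E) ↔ ∃ c : E → R, (∀ y ∈ s, 0 ≤ c y) ∧ ∑ y ∈ s, c y • y = x := by
  constructor
  · rw [Submodule.mem_span_finset]
    rintro ⟨c, -, rfl⟩
    exact ⟨fun y => c y, fun y _ => (c y).2, rfl⟩
  · rintro ⟨c, hc, rfl⟩
    exact Submodule.sum_mem _ fun y hy => Submodule.smul_mem _ ⟨c y, hc y hy⟩ (subset_hull hy)

end OrderedSemiring

section LinearOrderedField

variable {𝕜 E : Type*} [Field 𝕜] [LinearOrder 𝕜] [IsStrictOrderedRing 𝕜] [AddCommGroup E]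
  [Module 𝕜 E]

lemma exists_mem_hull_erase_of_not_linearIndepOn [DecidableEq E] {s : Finset E}
    (hs : ¬LinearIndepOn 𝕜 id (s : Set E)) {x : E} (hx : x ∈ hull 𝕜 (s : Set E)) :
    ∃ y ∈ s, x ∈ hull 𝕜 (s.erase y : Set E) := by
  obtain ⟨c, hc, rfl⟩ := mem_hull_finset_iff.1 hx
  obtain ⟨g, hg, hgpos⟩ := exists_pos_of_not_linearIndepOn hs
  obtain ⟨t, y₀, hy₀, hnonneg, hzero⟩ := s.exists_nonneg_sub_mul_eq_zero hc hgpos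
  refine ⟨y₀, hy₀, mem_hull_finset_iff.2 ⟨fun y => c y - t * g y,
    fun y hy => hnonneg y (Finset.mem_of_mem_erase hy), ?_⟩⟩
  calc ∑ y ∈ s.erase y₀, (c y - t * g y) • y = ∑ y ∈ s, (c y - t * g y) • y :=
        Finset.sum_erase _ (by rw [hzero, zero_smul])
    _ = ∑ y ∈ s, c y • y := by
        simp only [sub_smul, mul_smul, Finset.sum_sub_distrib, ← Finset.smul_sum, hg, smul_zero,
          sub_zero]

end LinearOrderedField

section Topology

variable {E ι : Type*} [AddCommGroup E] [Module ℝ E] [TopologicalSpace E] [IsTopologicalAddGroup E]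
  [ContinuousSMul ℝ E] [T2Space E]

lemma isClosed_hull_range_of_linearIndependent [Fintype ι] {v : ι → E}
    (hv : LinearIndependent ℝ v) : IsClosed (hull ℝ (range v) : Set E) := by
  have himage : (hull ℝ (range v) : Set E) = Fintype.linearCombination ℝ v '' Ici 0 := by
    ext x
    simp [mem_hull_range_iff, Fintype.linearCombination_apply]
  rw [himage]
  exact (LinearMap.isClosedEmbedding_of_injective (LinearMap.ker_eq_bot.2
    (linearIndependent_iff_injective_fintypeLinearCombination.1 hv))).isClosedMap _ isClosed_Ici

lemma isClosed_hull_finset (s : Finset E) : IsClosed (hull ℝ (s : Set E) : Set E) := by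
  classical
  induction s using Finset.strongInduction with
  | H s ih =>
    by_cases hs : LinearIndepOn ℝ id (s : Set E)
    · simpa using isClosed_hull_range_of_linearIndependent hs
    have hunion : (hull ℝ (s : Set E) : Set E) = ⋃ y ∈ s, (hull ℝ (s.erase y : Set E) : Set E) := by
      refine Subset.antisymm (fun x hx => ?_) (iUnion₂_subset fun y _ => ?_)
      · simpa using exists_mem_hull_erase_of_not_linearIndepOn hs hx
      · exact Submodule.span_mono (by simp)
    rw [hunion]
    exact isClosed_biUnion_finset fun y hy => ih _ (Finset.erase_ssubset hy)

theorem isClosed_of_fg {C : PointedCone ℝ E} (hC : C.FG) : IsClosed (C : Set E) := by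
  obtain ⟨s, rfl⟩ := hC
  exact isClosed_hull_finset s

end Topology

end PointedCone

namespace ProperCone

variable {E : Type*} [NormedAddCommGroup E] [InnerProductSpace ℝ E] [CompleteSpace E]

lemma innerDual_hull (s : Set E) : innerDual (PointedCone.hull ℝ s : Set E) = innerDual s :=
  toPointedCone_injective (PointedCone.dual_hull s)

theorem innerDual_innerDual_of_finite {s : Set E} (hs : s.Finite) :
    (innerDual (innerDual s : Set E) : Set E) = PointedCone.hull ℝ s := by
  let K : ProperCone ℝ E :=
    ⟨PointedCone.hull ℝ s, PointedCone.isClosed_of_fg (Submodule.fg_span hs)⟩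
  have hK := innerDual_innerDual K
  rw [show (K : Set E) = PointedCone.hull ℝ s from rfl, innerDual_hull] at hK
  exact congrArg SetLike.coe hK

end ProperCone

lemma inner_toE_row {p m : ℕ} (C : Matrix (Fin p) (Fin m) ℝ) (u : EuclideanSpace ℝ (Fin m))
    (j : Fin p) : ⟪toE (C j), u⟫ = C.mulVec u j := by
  simp [toE, PiLp.inner_apply, Matrix.mulVec, dotProduct, mul_comm]

lemma toE_transpose_mulVec {p m : ℕ} (C : Matrix (Fin p) (Fin m) ℝ) (l : Fin p → ℝ) :
    toE (Cᵀ *ᵥ l) = ∑ j, l j • toE (C j) := by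
  ext i
  simp [toE, Matrix.mulVec, dotProduct, mul_comm]

/-- **Polar of a polyhedral cone (Farkas).** For `U = {u : Cu ≤ 0}`, the polar cone
`{y : ⟪y, u⟫ ≤ 0 ∀ u ∈ U}` equals the finitely generated cone `{Cᵀλ : λ ≥ 0}`; in
particular the latter is closed. -/
theorem polar_polyhedral_cone_eq_finitely_generated {p m : ℕ}
    (C : Matrix (Fin p) (Fin m) ℝ) :
    {y : EuclideanSpace ℝ (Fin m) |
        ∀ u : EuclideanSpace ℝ (Fin m), (∀ j, C.mulVec u j ≤ 0) → ⟪y, u⟫ ≤ 0}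
      = {y : EuclideanSpace ℝ (Fin m) | ∃ l : Fin p → ℝ, (∀ j, 0 ≤ l j) ∧ y = toE (Cᵀ.mulVec l)} ∧
    IsClosed {y : EuclideanSpace ℝ (Fin m) | ∃ l : Fin p → ℝ, (∀ j, 0 ≤ l j) ∧ y = toE (Cᵀ.mulVec l)} := by
  set rows : Fin p → EuclideanSpace ℝ (Fin m) := fun j => toE (C j)
  have hcone : {y : EuclideanSpace ℝ (Fin m) | ∃ l : Fin p → ℝ, (∀ j, 0 ≤ l j) ∧
      y = toE (Cᵀ.mulVec l)} = PointedCone.hull ℝ (range rows) := by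
    ext y
    simp only [mem_ofPred_eq, SetLike.mem_coe, PointedCone.mem_hull_range_iff,
      toE_transpose_mulVec, eq_comm (a := y), Pi.le_def, Pi.zero_apply, rows]
  have hpolar : {y : EuclideanSpace ℝ (Fin m) |
      ∀ u : EuclideanSpace ℝ (Fin m), (∀ j, C.mulVec u j ≤ 0) → ⟪y, u⟫ ≤ 0} =
      SetLike.coe (ProperCone.innerDual (SetLike.coe (ProperCone.innerDual (range rows)))) := by
    ext y
    simp only [mem_ofPred_eq, SetLike.mem_coe, ProperCone.mem_innerDual, forall_mem_range,
      rows, inner_toE_row]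
    refine (Equiv.neg _).forall_congr fun u => ?_
    simp [Matrix.mulVec_neg, real_inner_comm]
  rw [hcone, hpolar, ProperCone.innerDual_innerDual_of_finite (finite_range rows)]
  exact ⟨rfl, PointedCone.isClosed_of_fg (Submodule.fg_span (finite_range rows))⟩
end

section
/- Fix M, K ∈ ℕ with K ≤ M, bounds 0 < ρ₁ < ρ₂, matrices C_i ∈ ℝ^{p_i×m} defining closed polyhedral cones U_i = {u ∈ ℝ^m : C_i u ≤ 0}, and y ∈ ℝ^m. Let Γ_i = ‖proj_{U_i}(y)‖₂. Then the supremum of Σᵢ ⟨y, u_i⟩ over all tuples (u_i, γ_i, σ_i)_{i=1}^M satisfying u_i ∈ U_i, ‖u_i‖₂ ≤ σ_i, γ_iρ₁ ≤ σ_i ≤ γ_iρ₂, 0 ≤ γ_i ≤ 1, and Σᵢ γ_i ≤ K equals ρ₂ times the maximum over subsets S ⊆ {1,…,M} with |S| ≤ K of Σ_{i∈S} Γ_i, and this supremum is attained. -/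
/-!
If `p` is the projection of `y` onto a convex cone `U`, then `⟪y - p, z - p⟫ ≤ 0` on `U`;
testing `z = 0`, `2p` and `p + u` gives `⟪y, p⟫ = ‖p‖²` and `⟪y, u⟫ ≤ ‖p‖ ‖u‖` for `u ∈ U`. So each
term is at most `ρ₂ γᵢ Γᵢ`, with equality for `uᵢ = (ρ₂ γᵢ / Γᵢ) pᵢ`, and it remains to maximize the
linear form `∑ γᵢ Γᵢ` over `0 ≤ γ ≤ 1`, `∑ γ ≤ K`. A best `K`-subset `S` is optimal: by exchange,
`Γⱼ ≤ t := min_S Γ` for `j ∉ S`, hence `∑ γᵢ Γᵢ ≤ ∑_S (Γᵢ - t) + t ∑ γᵢ ≤ ∑_S Γᵢ`.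
-/

open Matrix
open scoped RealInnerProductSpace

namespace PointedCone

variable {E : Type*} [NormedAddCommGroup E] [InnerProductSpace ℝ E]
  {U : PointedCone ℝ E} {y p : E}

theorem inner_sub_le_zero_of_forall_dist_le (hp : p ∈ U)
    (hmin : ∀ z ∈ U, dist y p ≤ dist y z) {z : E} (hz : z ∈ U) : ⟪y - p, z - p⟫ ≤ 0 := by
  have : Nonempty U := ⟨⟨p, hp⟩⟩
  refine (norm_eq_iInf_iff_real_inner_le_zero U.convex hp).1 (le_antisymm ?_ ?_) z hz
  · exact le_ciInf fun w => by simpa only [dist_eq_norm] using hmin w w.2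
  · exact ciInf_le (f := fun w : U => ‖y - w‖) ⟨0, Set.forall_mem_range.2 fun _ => norm_nonneg _⟩
      ⟨p, hp⟩

theorem inner_eq_norm_sq_of_forall_dist_le (hp : p ∈ U)
    (hmin : ∀ z ∈ U, dist y p ≤ dist y z) : ⟪y, p⟫ = ‖p‖ ^ 2 := by
  have h0 := inner_sub_le_zero_of_forall_dist_le hp hmin U.zero_mem
  have h2 := inner_sub_le_zero_of_forall_dist_le hp hmin (U.smul_mem zero_le_two hp)
  rw [two_smul, add_sub_cancel_right, inner_sub_left, real_inner_self_eq_norm_sq] at h2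
  rw [zero_sub, inner_neg_right, inner_sub_left, real_inner_self_eq_norm_sq] at h0
  linarith

theorem inner_le_norm_mul_norm_of_forall_dist_le (hp : p ∈ U)
    (hmin : ∀ z ∈ U, dist y p ≤ dist y z) {u : E} (hu : u ∈ U) : ⟪y, u⟫ ≤ ‖p‖ * ‖u‖ := by
  have h := inner_sub_le_zero_of_forall_dist_le hp hmin (U.add_mem hp hu)
  rw [add_sub_cancel_left, inner_sub_left] at h
  linarith [real_inner_le_norm p u]

end PointedCone

def Matrix.nonposCone {ι : Type*} {m : ℕ} (C : Matrix ι (Fin m) ℝ) :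
    PointedCone ℝ (EuclideanSpace ℝ (Fin m)) where
  carrier := {z | ∀ j, (C *ᵥ z) j ≤ 0}
  add_mem' {x z} hx hz j := by
    simpa only [WithLp.ofLp_add, mulVec_add, Pi.add_apply] using add_nonpos (hx j) (hz j)
  zero_mem' j := by simp
  smul_mem' c {x} hx j := by
    simpa only [WithLp.ofLp_smul, mulVec_smul, Pi.smul_apply] using
      smul_nonpos_of_nonneg_of_nonpos (zero_le (a := c)) (hx j)

section BoundedCardSums

variable {ι : Type*} {a : ι → ℝ}

def boundedCardSums (a : ι → ℝ) (K : ℕ) : Set ℝ :=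
  {x | ∃ S : Finset ι, S.card ≤ K ∧ x = ∑ i ∈ S, a i}

theorem exists_card_eq_isGreatest_boundedCardSums [Fintype ι] (ha : 0 ≤ a) {K : ℕ}
    (hK : K ≤ Fintype.card ι) :
    ∃ S : Finset ι, S.card = K ∧ IsGreatest (boundedCardSums a K) (∑ i ∈ S, a i) := by
  obtain ⟨S, hS, hSmax⟩ := Finset.exists_max_image (Finset.univ.powersetCard K)
    (fun T => ∑ i ∈ T, a i) (Finset.powersetCard_nonempty.2 (by simpa using hK))
  rw [Finset.mem_powersetCard_univ] at hS
  refine ⟨S, hS, ⟨S, hS.le, rfl⟩, ?_⟩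
  rintro _ ⟨T, hT, rfl⟩
  obtain ⟨T', hTT', hT'⟩ := Finset.exists_superset_card_eq hT (by simpa using hK)
  calc ∑ i ∈ T, a i ≤ ∑ i ∈ T', a i :=
        Finset.sum_le_sum_of_subset_of_nonneg hTT' fun i _ _ => ha i
    _ ≤ ∑ i ∈ S, a i := hSmax T' (Finset.mem_powersetCard_univ.2 hT')

theorem le_of_isGreatest_boundedCardSums {S : Finset ι}
    (hS : IsGreatest (boundedCardSums a S.card) (∑ i ∈ S, a i)) {i j : ι}
    (hi : i ∈ S) (hj : j ∉ S) : a j ≤ a i := by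
  classical
  have hjS : j ∉ S.erase i := fun h => hj (Finset.mem_of_mem_erase h)
  have hcard : (insert j (S.erase i)).card ≤ S.card := by
    rw [Finset.card_insert_of_notMem hjS, Finset.card_erase_add_one hi]
  have hswap := hS.2 ⟨_, hcard, rfl⟩
  rw [Finset.sum_insert hjS, ← Finset.sum_erase_add S a hi] at hswap
  linarith

theorem Finset.sum_mul_le_sum_of_threshold [Fintype ι] {S : Finset ι} {t : ℝ} (ht : 0 ≤ t)
    (hS : ∀ i ∈ S, t ≤ a i) (hSc : ∀ i ∉ S, a i ≤ t) {γ : ι → ℝ}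
    (hγ0 : ∀ i, 0 ≤ γ i) (hγ1 : ∀ i, γ i ≤ 1) (hγS : ∑ i, γ i ≤ S.card) :
    ∑ i, γ i * a i ≤ ∑ i ∈ S, a i := by
  classical
  have hterm : ∀ i, γ i * a i ≤ (if i ∈ S then a i - t else 0) + t * γ i := by
    intro i
    by_cases hi : i ∈ S
    · simp only [hi, if_true]
      nlinarith [hγ0 i, hγ1 i, hS i hi]
    · simp only [hi, if_false]
      nlinarith [hγ0 i, hSc i hi]
  calc ∑ i, γ i * a i ≤ ∑ i, ((if i ∈ S then a i - t else 0) + t * γ i) :=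
        Finset.sum_le_sum fun i _ => hterm i
    _ = ∑ i ∈ S, a i - S.card * t + t * ∑ i, γ i := by
        rw [Finset.sum_add_distrib, Finset.sum_ite_mem, Finset.univ_inter, Finset.sum_sub_distrib,
          Finset.sum_const, nsmul_eq_mul, Finset.mul_sum]
    _ ≤ ∑ i ∈ S, a i := by nlinarith

theorem sum_mul_le_of_isGreatest_boundedCardSums [Fintype ι] (ha : 0 ≤ a) {S : Finset ι}
    (hS : IsGreatest (boundedCardSums a S.card) (∑ i ∈ S, a i)) {γ : ι → ℝ}
    (hγ0 : ∀ i, 0 ≤ γ i) (hγ1 : ∀ i, γ i ≤ 1) (hγS : ∑ i, γ i ≤ S.card) :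
    ∑ i, γ i * a i ≤ ∑ i ∈ S, a i := by
  rcases S.eq_empty_or_nonempty with rfl | hne
  · have hγ : γ = 0 := by
      ext i
      exact (Finset.sum_eq_zero_iff_of_nonneg fun i _ => hγ0 i).1
        (le_antisymm (by simpa using hγS) (Finset.sum_nonneg fun i _ => hγ0 i)) i
        (Finset.mem_univ i)
    simp [hγ]
  · obtain ⟨i₀, hi₀, hmin⟩ := S.exists_min_image a hne
    exact Finset.sum_mul_le_sum_of_threshold (ha i₀) hmin
      (fun j hj => le_of_isGreatest_boundedCardSums hS hi₀ hj) hγ0 hγ1 hγS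

end BoundedCardSums

section Hamiltonian

variable {E ι : Type*} [NormedAddCommGroup E] [InnerProductSpace ℝ E] [Fintype ι]

def hamiltonianValues (U : ι → PointedCone ℝ E) (y : E) (ρ₁ ρ₂ : ℝ) (K : ℕ) : Set ℝ :=
  {r | ∃ (u : ι → E) (γ σ : ι → ℝ),
    (∀ i, u i ∈ U i ∧ ‖u i‖ ≤ σ i ∧ γ i * ρ₁ ≤ σ i ∧ σ i ≤ γ i * ρ₂ ∧ 0 ≤ γ i ∧ γ i ≤ 1) ∧
    (∑ i, γ i) ≤ (K : ℝ) ∧ r = ∑ i, ⟪y, u i⟫}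

theorem norm_div_norm_smul_le {c : ℝ} (hc : 0 ≤ c) (x : E) : ‖(c / ‖x‖) • x‖ ≤ c := by
  rcases eq_or_ne ‖x‖ 0 with hx | hx
  · simp [hx, hc]
  · rw [norm_smul, Real.norm_of_nonneg (by positivity), div_mul_cancel₀ _ hx]

variable {U : ι → PointedCone ℝ E} {y : E} {p : ι → E} {ρ₁ ρ₂ : ℝ}

theorem mem_upperBounds_hamiltonianValues (hρ₂ : 0 ≤ ρ₂) (hp : ∀ i, p i ∈ U i)
    (hmin : ∀ i, ∀ z ∈ U i, dist y (p i) ≤ dist y z) {S : Finset ι}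
    (hS : IsGreatest (boundedCardSums (fun i => ‖p i‖) S.card) (∑ i ∈ S, ‖p i‖)) :
    ρ₂ * ∑ i ∈ S, ‖p i‖ ∈ upperBounds (hamiltonianValues U y ρ₁ ρ₂ S.card) := by
  rintro _ ⟨u, γ, σ, hfeas, hγS, rfl⟩
  have hterm : ∀ i, ⟪y, u i⟫ ≤ ρ₂ * (γ i * ‖p i‖) := fun i => by
    obtain ⟨hu, hσ, -, hσρ, -, -⟩ := hfeas i
    nlinarith [PointedCone.inner_le_norm_mul_norm_of_forall_dist_le (hp i) (hmin i) hu,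
      norm_nonneg (p i)]
  calc ∑ i, ⟪y, u i⟫ ≤ ρ₂ * ∑ i, γ i * ‖p i‖ := by
        rw [Finset.mul_sum]; exact Finset.sum_le_sum fun i _ => hterm i
    _ ≤ ρ₂ * ∑ i ∈ S, ‖p i‖ := by
        gcongr
        exact sum_mul_le_of_isGreatest_boundedCardSums (fun i => norm_nonneg _) hS
          (fun i => (hfeas i).2.2.2.2.1) (fun i => (hfeas i).2.2.2.2.2) hγS

theorem mem_hamiltonianValues (hρ₂ : 0 ≤ ρ₂) (hρ : ρ₁ ≤ ρ₂) (hp : ∀ i, p i ∈ U i)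
    (hmin : ∀ i, ∀ z ∈ U i, dist y (p i) ≤ dist y z) (S : Finset ι) :
    ρ₂ * ∑ i ∈ S, ‖p i‖ ∈ hamiltonianValues U y ρ₁ ρ₂ S.card := by
  classical
  set γ : ι → ℝ := fun i => if i ∈ S then 1 else 0
  have hγ0 : ∀ i, 0 ≤ γ i := fun i => by positivity
  refine ⟨fun i => (ρ₂ * γ i / ‖p i‖) • p i, γ, fun i => ρ₂ * γ i,
    fun i => ⟨?_, ?_, ?_, ?_, ?_, ?_⟩, ?_, ?_⟩
  · exact (U i).smul_mem (by positivity) (hp i)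
  · exact norm_div_norm_smul_le (by positivity) (p i)
  · exact (mul_le_mul_of_nonneg_left hρ (hγ0 i)).trans_eq (mul_comm _ _)
  · rw [mul_comm]
  · exact hγ0 i
  · simp only [γ]; split_ifs <;> norm_num
  · simp [γ]
  · have hterm : ∀ i, ⟪y, (ρ₂ * γ i / ‖p i‖) • p i⟫ = ρ₂ * γ i * ‖p i‖ := fun i => by
      rw [real_inner_smul_right, PointedCone.inner_eq_norm_sq_of_forall_dist_le (hp i) (hmin i)]
      rcases eq_or_ne ‖p i‖ 0 with h | h
      · simp [h]
      · field_simp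
    rw [Finset.sum_congr rfl fun i _ => hterm i]
    simp only [γ, mul_ite, mul_one, mul_zero, ite_mul, zero_mul, Finset.sum_ite_mem,
      Finset.univ_inter, Finset.mul_sum]

theorem isGreatest_hamiltonianValues (hρ₂ : 0 ≤ ρ₂) (hρ : ρ₁ ≤ ρ₂) (hp : ∀ i, p i ∈ U i)
    (hmin : ∀ i, ∀ z ∈ U i, dist y (p i) ≤ dist y z) {S : Finset ι}
    (hS : IsGreatest (boundedCardSums (fun i => ‖p i‖) S.card) (∑ i ∈ S, ‖p i‖)) :
    IsGreatest (hamiltonianValues U y ρ₁ ρ₂ S.card) (ρ₂ * ∑ i ∈ S, ‖p i‖) :=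
  ⟨mem_hamiltonianValues hρ₂ hρ hp hmin S, mem_upperBounds_hamiltonianValues hρ₂ hp hmin hS⟩

end Hamiltonian

/-- **Pointwise Hamiltonian maximization for the relaxed problem.** Let `Uᵢ = {u : Cᵢu ≤ 0}`
be polyhedral cones, `y ∈ ℝ^m`, and let `P i` be the metric projection of `y` onto `Uᵢ`,
so `Γᵢ = ‖P i‖`. The supremum of `∑ᵢ ⟪y, uᵢ⟫` over tuples `(uᵢ, γᵢ, σᵢ)` with `uᵢ ∈ Uᵢ`,
`‖uᵢ‖ ≤ σᵢ`, `γᵢρ₁ ≤ σᵢ ≤ γᵢρ₂`, `0 ≤ γᵢ ≤ 1` and `∑ᵢ γᵢ ≤ K` is attained and equals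
`ρ₂` times the maximum over subsets `S` with `|S| ≤ K` of `∑_{i∈S} Γᵢ`. -/
theorem hamiltonian_max_eq_rho2_mul_best_gains {m M : ℕ} (K : ℕ) (hK : K ≤ M)
    (ρ₁ ρ₂ : ℝ) (hρ1 : 0 < ρ₁) (hρ12 : ρ₁ < ρ₂)
    (p : Fin M → ℕ) (C : ∀ i : Fin M, Matrix (Fin (p i)) (Fin m) ℝ)
    (y : EuclideanSpace ℝ (Fin m))
    (P : Fin M → EuclideanSpace ℝ (Fin m))
    (hPU : ∀ i, ∀ j, (C i).mulVec (P i) j ≤ 0)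
    (hP : ∀ i, ∀ z : EuclideanSpace ℝ (Fin m),
      (∀ j, (C i).mulVec z j ≤ 0) → dist y (P i) ≤ dist y z) :
    ∃ V : ℝ,
      IsGreatest {x : ℝ | ∃ S : Finset (Fin M), S.card ≤ K ∧ x = ∑ i ∈ S, ‖P i‖} V ∧
      IsGreatest {r : ℝ |
        ∃ (u : Fin M → EuclideanSpace ℝ (Fin m)) (γ σ : Fin M → ℝ),
          (∀ i, (∀ j, (C i).mulVec (u i) j ≤ 0) ∧ ‖u i‖ ≤ σ i ∧
            γ i * ρ₁ ≤ σ i ∧ σ i ≤ γ i * ρ₂ ∧ 0 ≤ γ i ∧ γ i ≤ 1) ∧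
          (∑ i, γ i) ≤ (K : ℝ) ∧ r = ∑ i, ⟪y, u i⟫} (ρ₂ * V) := by
  obtain ⟨S, rfl, hS⟩ := exists_card_eq_isGreatest_boundedCardSums (a := fun i => ‖P i‖)
    (fun i => norm_nonneg _) (hK.trans_eq (Fintype.card_fin M).symm)
  exact ⟨_, hS, isGreatest_hamiltonianValues (U := fun i => (C i).nonposCone)
    (hρ1.trans hρ12).le hρ12.le hPU (fun i z hz => hP i z hz) hS⟩
end

section
/- Fix M, K ∈ ℕ with K ≤ M, bounds 0 < ρ₁ < ρ₂, matrices C_i ∈ ℝ^{p_i×m} defining closed polyhedral cones U_i = {u ∈ ℝ^m : C_i u ≤ 0}, and y ∈ ℝ^m, and let Γ_i = ‖proj_{U_i}(y)‖₂. Let K' = #{i : Γ_i > 0} and K'' = min{K, K'}, and suppose: (i) there is a set S of K'' indices with Γ_i > 0 for all i ∈ S and Γ_i > Γ_j for all i ∈ S and j ∉ S; and (ii) for every j with Γ_j = 0, ⟨y, u⟩ < 0 for every nonzero u ∈ U_j. Then every maximizer (u_i, γ_i, σ_i)_{i=1}^M of Σᵢ ⟨y, u_i⟩ subject to u_i ∈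 U_i, ‖u_i‖₂ ≤ σ_i, γ_iρ₁ ≤ σ_i ≤ γ_iρ₂, 0 ≤ γ_i ≤ 1, Σᵢ γ_i ≤ K has control components u_i = (ρ₂/Γ_i)·proj_{U_i}(y) for i ∈ S and u_j = 0 for j ∉ S; in particular at most K controls are nonzero and each nonzero control has norm exactly ρ₂ (bang-bang structure), so the maximizing controls are feasible for the original non-convex input constraints ‖u_i‖₂ ∈ {0} ∪ [ρ₁, ρ₂] with at most K inputs active. -/
/-!
Moreau's decomposition for the projection `P i` of `y` onto the cone `Uᵢ` gives
`⟪y, w⟫ ≤ ⟪P i, w⟫` on `Uᵢ` and `⟪y, P i⟫ = ‖P i‖²`. By Cauchy–Schwarz a feasible point therefore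
has value at most `ρ₂ ∑ Γᵢ γᵢ`, and the linear program `max ∑ Γᵢ γᵢ` over `0 ≤ γ ≤ 1`,
`∑ γ ≤ K` is solved by the indicator of the set `S` of the largest gains; the bang-bang candidate
attains the resulting value `ρ₂ ∑_{i ∈ S} Γᵢ`. For a maximizer every inequality in this chain is
tight: `γ = 1` on `S`, so equality in Cauchy–Schwarz puts `uᵢ` on the ray of `P i` at norm `ρ₂`,
while off `S` either `γⱼ = 0` or `Γⱼ = 0`, and in the latter case `⟪y, uⱼ⟫ = 0` and polarity
force `uⱼ = 0`.
-/

open Matrix Finset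
open scoped RealInnerProductSpace

section Threshold

variable {ι : Type*} [Fintype ι]

theorem exists_threshold_of_gap {Γ : ι → ℝ} {S : Finset ι} {K : ℝ}
    (hSpos : ∀ i ∈ S, 0 < Γ i) (hgap : ∀ i ∈ S, ∀ j ∉ S, Γ j < Γ i)
    (hK : (#S : ℝ) = K ∨ ∀ j ∉ S, Γ j = 0) :
    ∃ c, 0 ≤ c ∧ (∀ i ∈ S, c < Γ i) ∧ (∀ j ∉ S, Γ j < c ∨ Γ j = 0) ∧ c * K = c * #S := by
  classical
  rcases hK with hK | hzero
  · obtain ⟨c, hlo, hhi⟩ := Order.exists_between_finsets (insert 0 (Sᶜ.image Γ)) (S.image Γ) <| by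
      simp only [mem_insert, mem_image, mem_compl]
      rintro _ (rfl | ⟨j, hj, rfl⟩) _ ⟨i, hi, rfl⟩
      exacts [hSpos i hi, hgap i hi j hj]
    refine ⟨c, (hlo 0 (mem_insert_self _ _)).le, fun i hi => hhi _ (mem_image_of_mem _ hi),
      fun j hj => Or.inl (hlo _ (mem_insert_of_mem (mem_image_of_mem _ (mem_compl.2 hj)))), ?_⟩
    rw [hK]
  · exact ⟨0, le_rfl, hSpos, fun j hj => Or.inr (hzero j hj), by simp⟩

theorem sum_mul_le_sum_of_threshold {Γ γ : ι → ℝ} {S : Finset ι} {K c : ℝ} (hc : 0 ≤ c)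
    (hS : ∀ i ∈ S, c < Γ i) (hSc : ∀ j ∉ S, Γ j < c ∨ Γ j = 0) (hcK : c * K = c * #S)
    (hγ₀ : ∀ i, 0 ≤ γ i) (hγ₁ : ∀ i, γ i ≤ 1) (hγK : ∑ i, γ i ≤ K) :
    ∑ i, Γ i * γ i ≤ ∑ i ∈ S, Γ i ∧
      (∑ i ∈ S, Γ i ≤ ∑ i, Γ i * γ i → (∀ i ∈ S, γ i = 1) ∧ ∀ j ∉ S, Γ j * γ j = 0) := by
  classical
  have hSc' : ∀ j ∉ S, Γ j ≤ c := fun j hj => (hSc j hj).elim le_of_lt (fun h => h ▸ hc)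
  -- With these nonnegative slacks, `∑ Γᵢ γᵢ + ∑ sᵢ = ∑_{i ∈ S} Γᵢ - c (K - ∑ γᵢ)`.
  set s : ι → ℝ := fun i => if i ∈ S then (Γ i - c) * (1 - γ i) else (c - Γ i) * γ i
  have hs : ∀ i, 0 ≤ s i := fun i => by
    by_cases hi : i ∈ S
    · simp only [s, if_pos hi]
      exact mul_nonneg (sub_nonneg.2 (hS i hi).le) (sub_nonneg.2 (hγ₁ i))
    · simp only [s, if_neg hi]
      exact mul_nonneg (sub_nonneg.2 (hSc' i hi)) (hγ₀ i)
  have hsplit : ∀ i, Γ i * γ i = (if i ∈ S then Γ i - c else 0) - s i + c * γ i := fun i => by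
    by_cases hi : i ∈ S <;> simp only [s, hi, if_true, if_false] <;> ring
  have hsum : ∑ i, Γ i * γ i + ∑ i, s i ≤ ∑ i ∈ S, Γ i := by
    simp only [hsplit, sum_add_distrib, sum_sub_distrib, ← mul_sum, sum_ite_mem, univ_inter,
      sum_const, nsmul_eq_mul]
    linarith [mul_le_mul_of_nonneg_left hγK hc]
  have hs_sum := sum_nonneg fun i (_ : i ∈ univ) => hs i
  refine ⟨by linarith, fun heq => ?_⟩
  have hs0 : ∀ i, s i = 0 := fun i =>
    (sum_eq_zero_iff_of_nonneg fun i _ => hs i).1 (by linarith) i (mem_univ i)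
  refine ⟨fun i hi => ?_, fun j hj => ?_⟩
  · have := hs0 i
    simp only [s, if_pos hi, mul_eq_zero, sub_eq_zero] at this
    exact this.elim (fun h => ((hS i hi).ne' h).elim) Eq.symm
  · have := hs0 j
    simp only [s, if_neg hj, mul_eq_zero, sub_eq_zero] at this
    rcases this with h | h
    · rcases hSc j hj with h' | h'
      · exact (h'.ne' h).elim
      · rw [h', zero_mul]
    · rw [h, mul_zero]

end Threshold

section InnerProductSpace

variable {E : Type*} [NormedAddCommGroup E] [InnerProductSpace ℝ E]

theorem norm_div_norm_smul {r : ℝ} (hr : 0 ≤ r) {v : E} (hv : v ≠ 0) : ‖(r / ‖v‖) • v‖ = r := by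
  simpa [div_eq_mul_inv] using norm_smul_inv_norm' (𝕜 := ℝ) hr hv

theorem eq_div_norm_smul_of_norm_le_of_mul_le_inner {u v : E} {r : ℝ} (hv : v ≠ 0)
    (hu : ‖u‖ ≤ r) (h : ‖v‖ * r ≤ ⟪v, u⟫) : u = (r / ‖v‖) • v := by
  have hv' : 0 < ‖v‖ := norm_pos_iff.2 hv
  have hcs : ⟪v, u⟫ ≤ ‖v‖ * ‖u‖ := real_inner_le_norm v u
  have hnorm : ‖u‖ = r := le_antisymm hu (le_of_mul_le_mul_left (h.trans hcs) hv')
  have hpar : ‖u‖ • v = ‖v‖ • u := inner_eq_norm_mul_iff_real.1 (hcs.antisymm (hnorm ▸ h))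
  rw [hnorm] at hpar
  rw [div_eq_inv_mul, mul_smul, hpar, inv_smul_smul₀ hv'.ne']

theorem PointedCone.inner_sub_nonpos_of_forall_dist_le {K : PointedCone ℝ E} {y v : E}
    (hv : v ∈ K) (hmin : ∀ w ∈ K, dist y v ≤ dist y w) :
    (∀ w ∈ K, ⟪y - v, w⟫ ≤ 0) ∧ ⟪y - v, v⟫ = 0 := by
  have hvar : ∀ w ∈ K, ⟪y - v, w - v⟫ ≤ 0 := by
    refine (norm_eq_iInf_iff_real_inner_le_zero K.convex hv).1 (le_antisymm ?_ ?_)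
    · exact le_ciInf fun w => by simpa only [dist_eq_norm] using hmin w w.2
    · exact ciInf_le ⟨0, Set.forall_mem_range.2 fun _ => norm_nonneg _⟩ (⟨v, hv⟩ : K)
  have hperp : ⟪y - v, v⟫ = 0 := by
    have h₀ := hvar 0 K.zero_mem
    have h₂ := hvar (v + v) (K.add_mem hv hv)
    rw [zero_sub, inner_neg_right] at h₀
    rw [add_sub_cancel_right] at h₂
    linarith
  refine ⟨fun w hw => ?_, hperp⟩
  simpa [hperp] using hvar (w + v) (K.add_mem hw hv)

theorem PointedCone.inner_le_inner_of_forall_dist_le {K : PointedCone ℝ E} {y v : E}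
    (hv : v ∈ K) (hmin : ∀ w ∈ K, dist y v ≤ dist y w) {w : E} (hw : w ∈ K) :
    ⟪y, w⟫ ≤ ⟪v, w⟫ := by
  have := (inner_sub_nonpos_of_forall_dist_le hv hmin).1 w hw
  rwa [inner_sub_left, sub_nonpos] at this

theorem PointedCone.inner_eq_norm_sq_of_forall_dist_le_s10 {K : PointedCone ℝ E} {y v : E}
    (hv : v ∈ K) (hmin : ∀ w ∈ K, dist y v ≤ dist y w) : ⟪y, v⟫ = ‖v‖ ^ 2 := by
  have := (inner_sub_nonpos_of_forall_dist_le hv hmin).2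
  rwa [inner_sub_left, real_inner_self_eq_norm_sq, sub_eq_zero] at this

end InnerProductSpace

theorem Finset.card_eq_or_forall_notMem_of_card_eq_min {ι : Type*} [Finite ι] {q : ι → Prop}
    {S : Finset ι} {K : ℕ} (hcard : #S = min K {i | q i}.ncard) (hS : ∀ i ∈ S, q i) :
    #S = K ∨ ∀ j ∉ S, ¬ q j := by
  rcases min_choice K {i | q i}.ncard with h | h
  · exact Or.inl (hcard.trans h)
  · refine Or.inr fun j hj hqj => hj ?_
    have hsub : (S : Set ι) ⊆ {i | q i} := fun i hi => hS i hi
    have heq := Set.eq_of_subset_of_ncard_le hsub (by rw [Set.ncard_coe_finset, hcard, h])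
    rw [← Finset.mem_coe, heq]
    exact hqj

section Hamiltonian

variable {ι E : Type*} [Fintype ι] [NormedAddCommGroup E] [InnerProductSpace ℝ E]

def IsFeasible (U : ι → PointedCone ℝ E) (ρ₁ ρ₂ K : ℝ) (u : ι → E) (γ σ : ι → ℝ) : Prop :=
  (∀ i, u i ∈ U i ∧ ‖u i‖ ≤ σ i ∧ γ i * ρ₁ ≤ σ i ∧ σ i ≤ γ i * ρ₂ ∧ 0 ≤ γ i ∧ γ i ≤ 1) ∧
    ∑ i, γ i ≤ K

variable {U : ι → PointedCone ℝ E} {ρ₁ ρ₂ K : ℝ}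

theorem IsFeasible.inner_le {u : ι → E} {γ σ : ι → ℝ} (h : IsFeasible U ρ₁ ρ₂ K u γ σ)
    {y : E} {P : ι → E} (hP : ∀ i, ∀ w ∈ U i, ⟪y, w⟫ ≤ ⟪P i, w⟫) (i : ι) :
    ⟪y, u i⟫ ≤ ρ₂ * (‖P i‖ * γ i) := by
  obtain ⟨hmem, hnorm, -, hσ, -, -⟩ := h.1 i
  calc ⟪y, u i⟫ ≤ ⟪P i, u i⟫ := hP i _ hmem
    _ ≤ ‖P i‖ * ‖u i‖ := real_inner_le_norm _ _
    _ ≤ ‖P i‖ * (γ i * ρ₂) := by gcongr; exact hnorm.trans hσ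
    _ = ρ₂ * (‖P i‖ * γ i) := by ring

theorem IsFeasible.eq_zero_of_inner_eq_zero {u : ι → E} {γ σ : ι → ℝ}
    (h : IsFeasible U ρ₁ ρ₂ K u γ σ) {y : E} {j : ι}
    (hpolar : ∀ w ∈ U j, w ≠ 0 → ⟪y, w⟫ < 0) (hy : ⟪y, u j⟫ = 0) : u j = 0 := by
  by_contra hne
  exact (hpolar _ (h.1 j).1 hne).ne hy

theorem IsFeasible.eq_zero_of_eq_zero {u : ι → E} {γ σ : ι → ℝ}
    (h : IsFeasible U ρ₁ ρ₂ K u γ σ) {j : ι} (hγ : γ j = 0) : u j = 0 := by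
  obtain ⟨-, hnorm, -, hσ, -, -⟩ := h.1 j
  rw [hγ, zero_mul] at hσ
  exact norm_le_zero_iff.1 (hnorm.trans hσ)

theorem exists_isFeasible_sum_inner_eq (hρ₂ : 0 ≤ ρ₂) (hρ : ρ₁ ≤ ρ₂) {y : E} {P : ι → E}
    (hPU : ∀ i, P i ∈ U i) (hPy : ∀ i, ⟪y, P i⟫ = ‖P i‖ ^ 2) {S : Finset ι} (hSK : (#S : ℝ) ≤ K) :
    ∃ u γ σ, IsFeasible U ρ₁ ρ₂ K u γ σ ∧ ∑ i, ⟪y, u i⟫ = ρ₂ * ∑ i ∈ S, ‖P i‖ := by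
  classical
  refine ⟨fun i => if i ∈ S then (ρ₂ / ‖P i‖) • P i else 0, fun i => if i ∈ S then 1 else 0,
    fun i => if i ∈ S then ρ₂ else 0, ⟨fun i => ?_, ?_⟩, ?_⟩
  · by_cases hi : i ∈ S
    · simp only [hi, if_true, one_mul]
      refine ⟨(U i).smul_mem (div_nonneg hρ₂ (norm_nonneg _)) (hPU i), ?_, hρ, le_rfl,
        zero_le_one, le_rfl⟩
      rcases eq_or_ne (P i) 0 with h0 | h0
      · simpa [h0] using hρ₂
      · exact (norm_div_norm_smul hρ₂ h0).le
    · simp [hi]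
  · simpa [sum_ite_mem] using hSK
  · simp only [apply_ite (inner ℝ y), inner_zero_right, sum_ite_mem, univ_inter, mul_sum,
      real_inner_smul_right, hPy]
    refine sum_congr rfl fun i _ => ?_
    rcases eq_or_ne ‖P i‖ 0 with h0 | h0
    · simp [h0]
    · field_simp

theorem IsFeasible.bang_bang_of_forall_le (hρ₂ : 0 < ρ₂) (hρ : ρ₁ ≤ ρ₂) {y : E} {P : ι → E}
    (hPU : ∀ i, P i ∈ U i) (hP : ∀ i, ∀ w ∈ U i, dist y (P i) ≤ dist y w) {S : Finset ι}
    (hSK : (#S : ℝ) ≤ K) (hSpos : ∀ i ∈ S, 0 < ‖P i‖) (hgap : ∀ i ∈ S, ∀ j ∉ S, ‖P j‖ < ‖P i‖)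
    (hK : (#S : ℝ) = K ∨ ∀ j ∉ S, ‖P j‖ = 0)
    (hpolar : ∀ j, ‖P j‖ = 0 → ∀ w ∈ U j, w ≠ 0 → ⟪y, w⟫ < 0)
    {u : ι → E} {γ σ : ι → ℝ} (hfeas : IsFeasible U ρ₁ ρ₂ K u γ σ)
    (hmax : ∀ u' γ' σ', IsFeasible U ρ₁ ρ₂ K u' γ' σ' → ∑ i, ⟪y, u' i⟫ ≤ ∑ i, ⟪y, u i⟫) :
    (∀ i ∈ S, u i = (ρ₂ / ‖P i‖) • P i) ∧ ∀ j ∉ S, u j = 0 := by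
  have hPw : ∀ i, ∀ w ∈ U i, ⟪y, w⟫ ≤ ⟪P i, w⟫ := fun i _ hw =>
    PointedCone.inner_le_inner_of_forall_dist_le (hPU i) (hP i) hw
  obtain ⟨u', γ', σ', hfeas', hval⟩ := exists_isFeasible_sum_inner_eq hρ₂.le hρ hPU
    (fun i => PointedCone.inner_eq_norm_sq_of_forall_dist_le_s10 (hPU i) (hP i)) hSK
  obtain ⟨c, hc, hcS, hcSc, hcK⟩ := exists_threshold_of_gap hSpos hgap hK
  obtain ⟨hLP, hLP_eq⟩ := sum_mul_le_sum_of_threshold hc hcS hcSc hcK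
    (fun i => (hfeas.1 i).2.2.2.2.1) (fun i => (hfeas.1 i).2.2.2.2.2) hfeas.2
  have hle := hfeas.inner_le hPw
  have hopt : ρ₂ * ∑ i ∈ S, ‖P i‖ ≤ ∑ i, ⟪y, u i⟫ := hval ▸ hmax u' γ' σ' hfeas'
  have hupper : ∑ i, ⟪y, u i⟫ ≤ ρ₂ * ∑ i, ‖P i‖ * γ i := by
    rw [mul_sum]; exact sum_le_sum fun i _ => hle i
  have hsum_eq : ∑ i, ⟪y, u i⟫ = ∑ i, ρ₂ * (‖P i‖ * γ i) := by
    rw [← mul_sum]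
    exact hupper.antisymm ((mul_le_mul_of_nonneg_left hLP hρ₂.le).trans hopt)
  have hterm : ∀ i, ⟪y, u i⟫ = ρ₂ * (‖P i‖ * γ i) := fun i =>
    (sum_eq_sum_iff_of_le fun i _ => hle i).1 hsum_eq i (mem_univ i)
  obtain ⟨hγS, hoff⟩ := hLP_eq (le_of_mul_le_mul_left (hopt.trans hupper) hρ₂)
  refine ⟨fun i hi => ?_, fun j hj => ?_⟩
  · obtain ⟨hmem, hnorm, -, hσ, -, -⟩ := hfeas.1 i
    refine eq_div_norm_smul_of_norm_le_of_mul_le_inner (norm_pos_iff.1 (hSpos i hi)) ?_ ?_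
    · simpa [hγS i hi] using hnorm.trans hσ
    · have := hPw i _ hmem
      rw [hterm, hγS i hi] at this
      linarith
  · rcases mul_eq_zero.1 (hoff j hj) with hPj | hγj
    · exact hfeas.eq_zero_of_inner_eq_zero (hpolar j hPj) (by rw [hterm, hPj]; simp)
    · exact hfeas.eq_zero_of_eq_zero hγj

end Hamiltonian

def polyhedralCone {n o : Type*} [Fintype o] (C : Matrix n o ℝ) :
    PointedCone ℝ (EuclideanSpace ℝ o) where
  carrier := {u | ∀ j, C.mulVec u j ≤ 0}
  add_mem' ha hb j := by
    rw [WithLp.ofLp_add, mulVec_add]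
    exact add_nonpos (ha j) (hb j)
  zero_mem' j := by simp
  smul_mem' c u hu j := by
    change (C *ᵥ ((c : ℝ) • u).ofLp) j ≤ 0
    rw [WithLp.ofLp_smul, mulVec_smul, Pi.smul_apply, smul_eq_mul]
    exact mul_nonpos_of_nonneg_of_nonpos c.2 (hu j)

theorem hamiltonian_maximizer_bang_bang_general {m M : ℕ} (K : ℕ)
    (ρ₁ ρ₂ : ℝ) (hρ1 : 0 < ρ₁) (hρ12 : ρ₁ < ρ₂)
    (p : Fin M → ℕ) (C : ∀ i : Fin M, Matrix (Fin (p i)) (Fin m) ℝ)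
    (y : EuclideanSpace ℝ (Fin m))
    (P : Fin M → EuclideanSpace ℝ (Fin m))
    (hPU : ∀ i, ∀ j, (C i).mulVec (P i) j ≤ 0)
    (hP : ∀ i, ∀ z : EuclideanSpace ℝ (Fin m),
      (∀ j, (C i).mulVec z j ≤ 0) → dist y (P i) ≤ dist y z)
    (S : Finset (Fin M))
    (hcard : S.card = min K (Set.ncard {i : Fin M | 0 < ‖P i‖}))
    (hSpos : ∀ i ∈ S, 0 < ‖P i‖)
    (hgap : ∀ i ∈ S, ∀ j ∉ S, ‖P j‖ < ‖P i‖)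
    (hpolar : ∀ j : Fin M, ‖P j‖ = 0 →
      ∀ u : EuclideanSpace ℝ (Fin m), (∀ jj, (C j).mulVec u jj ≤ 0) → u ≠ 0 → ⟪y, u⟫ < 0)
    (u : Fin M → EuclideanSpace ℝ (Fin m)) (γ σ : Fin M → ℝ)
    (hfeas : (∀ i, (∀ j, (C i).mulVec (u i) j ≤ 0) ∧ ‖u i‖ ≤ σ i ∧
      γ i * ρ₁ ≤ σ i ∧ σ i ≤ γ i * ρ₂ ∧ 0 ≤ γ i ∧ γ i ≤ 1) ∧ (∑ i, γ i) ≤ (K : ℝ))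
    (hmax : ∀ (u' : Fin M → EuclideanSpace ℝ (Fin m)) (γ' σ' : Fin M → ℝ),
      ((∀ i, (∀ j, (C i).mulVec (u' i) j ≤ 0) ∧ ‖u' i‖ ≤ σ' i ∧
        γ' i * ρ₁ ≤ σ' i ∧ σ' i ≤ γ' i * ρ₂ ∧ 0 ≤ γ' i ∧ γ' i ≤ 1) ∧
        (∑ i, γ' i) ≤ (K : ℝ)) →
      ∑ i, ⟪y, u' i⟫ ≤ ∑ i, ⟪y, u i⟫) :
    (∀ i ∈ S, u i = (ρ₂ / ‖P i‖) • P i) ∧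
    (∀ j ∉ S, u j = 0) ∧
    (∀ i, u i = 0 ∨ ‖u i‖ = ρ₂) := by
  have hρ₂ : 0 < ρ₂ := hρ1.trans hρ12
  have hSK : (#S : ℝ) ≤ K := by exact_mod_cast hcard.trans_le (min_le_left _ _)
  have hK : (#S : ℝ) = K ∨ ∀ j ∉ S, ‖P j‖ = 0 := by
    refine (Finset.card_eq_or_forall_notMem_of_card_eq_min hcard hSpos).imp
      (fun h => by exact_mod_cast h) fun h j hj => ?_
    exact (not_lt.1 (h j hj)).antisymm (norm_nonneg _)
  obtain ⟨hS, hSc⟩ := IsFeasible.bang_bang_of_forall_le (U := fun i => polyhedralCone (C i))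
    hρ₂ hρ12.le hPU hP hSK hSpos hgap hK hpolar hfeas hmax
  refine ⟨hS, hSc, fun i => ?_⟩
  by_cases hi : i ∈ S
  · rw [hS i hi]
    exact Or.inr (norm_div_norm_smul hρ₂.le (norm_pos_iff.1 (hSpos i hi)))
  · exact Or.inl (hSc i hi)

/-- **Bang-bang structure of the pointwise Hamiltonian maximizers.** With `Uᵢ = {u : Cᵢu ≤ 0}`,
`Γᵢ = ‖P i‖` where `P i` is the metric projection of `y` onto `Uᵢ`, `K' = #{i : Γᵢ > 0}`,
`K'' = min{K, K'}`, suppose (i) `S` is a set of `K''` indices with `Γᵢ > 0` on `S` and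
`Γᵢ > Γⱼ` for `i ∈ S`, `j ∉ S`, and (ii) whenever `Γⱼ = 0`, `⟪y, u⟫ < 0` for every
nonzero `u ∈ Uⱼ`. Then every maximizer `(uᵢ, γᵢ, σᵢ)` of `∑ᵢ ⟪y, uᵢ⟫` subject to
`uᵢ ∈ Uᵢ`, `‖uᵢ‖ ≤ σᵢ`, `γᵢρ₁ ≤ σᵢ ≤ γᵢρ₂`, `0 ≤ γᵢ ≤ 1`, `∑ᵢ γᵢ ≤ K` satisfies
`uᵢ = (ρ₂/Γᵢ) • P i` for `i ∈ S` and `uⱼ = 0` for `j ∉ S`; in particular each control is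
either `0` or of norm exactly `ρ₂` (bang-bang), so it is feasible for the non-convex
constraints `‖uᵢ‖ ∈ {0} ∪ [ρ₁, ρ₂]` with at most `K` inputs active. -/
theorem hamiltonian_maximizer_bang_bang {m M : ℕ} (K : ℕ) (hK : K ≤ M)
    (ρ₁ ρ₂ : ℝ) (hρ1 : 0 < ρ₁) (hρ12 : ρ₁ < ρ₂)
    (p : Fin M → ℕ) (C : ∀ i : Fin M, Matrix (Fin (p i)) (Fin m) ℝ)
    (y : EuclideanSpace ℝ (Fin m))
    (P : Fin M → EuclideanSpace ℝ (Fin m))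
    (hPU : ∀ i, ∀ j, (C i).mulVec (P i) j ≤ 0)
    (hP : ∀ i, ∀ z : EuclideanSpace ℝ (Fin m),
      (∀ j, (C i).mulVec z j ≤ 0) → dist y (P i) ≤ dist y z)
    (S : Finset (Fin M))
    (hcard : S.card = min K (Set.ncard {i : Fin M | 0 < ‖P i‖}))
    (hSpos : ∀ i ∈ S, 0 < ‖P i‖)
    (hgap : ∀ i ∈ S, ∀ j ∉ S, ‖P j‖ < ‖P i‖)
    (hpolar : ∀ j : Fin M, ‖P j‖ = 0 →
      ∀ u : EuclideanSpace ℝ (Fin m), (∀ jj, (C j).mulVec u jj ≤ 0) → u ≠ 0 → ⟪y, u⟫ < 0)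
    (u : Fin M → EuclideanSpace ℝ (Fin m)) (γ σ : Fin M → ℝ)
    (hfeas : (∀ i, (∀ j, (C i).mulVec (u i) j ≤ 0) ∧ ‖u i‖ ≤ σ i ∧
      γ i * ρ₁ ≤ σ i ∧ σ i ≤ γ i * ρ₂ ∧ 0 ≤ γ i ∧ γ i ≤ 1) ∧ (∑ i, γ i) ≤ (K : ℝ))
    (hmax : ∀ (u' : Fin M → EuclideanSpace ℝ (Fin m)) (γ' σ' : Fin M → ℝ),
      ((∀ i, (∀ j, (C i).mulVec (u' i) j ≤ 0) ∧ ‖u' i‖ ≤ σ' i ∧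
        γ' i * ρ₁ ≤ σ' i ∧ σ' i ≤ γ' i * ρ₂ ∧ 0 ≤ γ' i ∧ γ' i ≤ 1) ∧
        (∑ i, γ' i) ≤ (K : ℝ)) →
      ∑ i, ⟪y, u' i⟫ ≤ ∑ i, ⟪y, u i⟫) :
    (∀ i ∈ S, u i = (ρ₂ / ‖P i‖) • P i) ∧
    (∀ j ∉ S, u j = 0) ∧
    (∀ i, u i = 0 ∨ ‖u i‖ = ρ₂) :=
  hamiltonian_maximizer_bang_bang_general K ρ₁ ρ₂ hρ1 hρ12 p C y P hPU hP S hcard hSpos hgap hpolar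
    u γ σ hfeas hmax
end

section
/- Let A ∈ ℝ^{n×n}, C ∈ ℝ^{q×n}, and suppose the pair (−Aᵀ, C) is observable, i.e. ⋂_{k=0}^{n−1} ker(C(−Aᵀ)^k) = {0}. Let λ₀ ∈ ℝ^n be nonzero and define λ(t) = exp(−tAᵀ)λ₀ and the output z(t) = Cλ(t). Then for every t_f > 0, the zero set {t ∈ [0, t_f] : z(t) = 0} is finite. -/
/-! The output `z(t) = C exp(tM) λ₀`, `M = −Aᵀ`, is real-analytic in `t`. Infinitely many zeros in
the compact interval `[0, t_f]` would accumulate, so `z ≡ 0` by the identity theorem. Differentiating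
`k` times at `t = 0` then gives `C Mᵏ λ₀ = 0` for every `k`, and observability forces `λ₀ = 0`. -/

open Matrix

theorem AnalyticOnNhd.finite_setOf_eq_zero_of_isCompact {𝕜 E : Type*}
    [NontriviallyNormedField 𝕜] [ConnectedSpace 𝕜] [NormedAddCommGroup E] [NormedSpace 𝕜 E]
    {f : 𝕜 → E} (hf : AnalyticOnNhd 𝕜 f Set.univ) (hf0 : f ≠ 0) {K : Set 𝕜} (hK : IsCompact K) :
    {t ∈ K | f t = 0}.Finite := by
  obtain ⟨x, hx⟩ := Function.ne_iff.mp hf0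
  have hcodiscrete : f ⁻¹' {0}ᶜ ∈ Filter.codiscreteWithin K :=
    Filter.codiscreteWithin_mono (Set.subset_univ K) (hf.preimage_zero_mem_codiscrete hx)
  refine (hK.finite_sdiff_of_mem_codiscreteWithin hcodiscrete).subset fun t ht => ⟨ht.1, ?_⟩
  simpa using ht.2

section ExpSmul

variable {𝕂 𝔸 F : Type*} [RCLike 𝕂] [NormedRing 𝔸] [NormedAlgebra 𝕂 𝔸] [CompleteSpace 𝔸]
  [NormedAddCommGroup F] [NormedSpace 𝕂 F]

theorem ContinuousLinearMap.analyticOnNhd_comp_exp_smul (L : 𝔸 →L[𝕂] F) (x : 𝔸) :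
    AnalyticOnNhd 𝕂 (fun t : 𝕂 => L (NormedSpace.exp (t • x))) Set.univ := fun t _ =>
  L.analyticAt _ |>.comp <| (NormedSpace.exp_analytic _).comp <|
    (ContinuousLinearMap.toSpanSingleton 𝕂 x).analyticAt t

theorem ContinuousLinearMap.map_mul_exp_smul_eq_zero_of_forall (L : 𝔸 →L[𝕂] F) {x : 𝔸}
    (h : ∀ t : 𝕂, L (NormedSpace.exp (t • x)) = 0) (t : 𝕂) :
    L (x * NormedSpace.exp (t • x)) = 0 := by
  have hderiv := L.hasFDerivAt.comp_hasDerivAt t (hasDerivAt_exp_smul_const' x t)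
  rw [show (L ∘ fun u : 𝕂 => NormedSpace.exp (u • x)) = fun _ => 0 from funext h] at hderiv
  exact hderiv.unique (hasDerivAt_const t 0)

theorem ContinuousLinearMap.map_pow_eq_zero_of_forall_map_exp_smul_eq_zero (L : 𝔸 →L[𝕂] F)
    {x : 𝔸} (h : ∀ t : 𝕂, L (NormedSpace.exp (t • x)) = 0) (k : ℕ) : L (x ^ k) = 0 := by
  suffices ∀ t : 𝕂, L (x ^ k * NormedSpace.exp (t • x)) = 0 by
    simpa using this 0
  induction k with
  | zero => simpa using h
  | succ k ih =>
    intro t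
    simpa [pow_succ, mul_assoc] using
      (L.comp (ContinuousLinearMap.mul 𝕂 𝔸 (x ^ k))).map_mul_exp_smul_eq_zero_of_forall ih t

end ExpSmul

attribute [local instance] Matrix.linftyOpNormedRing Matrix.linftyOpNormedAlgebra

theorem observable_adjoint_output_finite_zero_set_general {n q : ℕ}
    (A : Matrix (Fin n) (Fin n) ℝ) (C : Matrix (Fin q) (Fin n) ℝ)
    (hobs : ∀ v : Fin n → ℝ, (∀ k : ℕ, k < n → C.mulVec (((-Aᵀ) ^ k).mulVec v) = 0) → v = 0)
    (l0 : Fin n → ℝ) (hl0 : l0 ≠ 0) (tf : ℝ) :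
    {t ∈ Set.Icc (0 : ℝ) tf |
      C.mulVec ((NormedSpace.exp ((-t) • Aᵀ)).mulVec l0) = 0}.Finite := by
  let output : Matrix (Fin n) (Fin n) ℝ →L[ℝ] (Fin q → ℝ) :=
    LinearMap.toContinuousLinearMap (mulVecLin C ∘ₗ (mulVecBilin ℝ ℝ).flip l0)
  have houtput (t : ℝ) : C *ᵥ (NormedSpace.exp ((-t) • Aᵀ) *ᵥ l0) =
      output (NormedSpace.exp (t • -Aᵀ)) := by
    simp [output, smul_neg]
  simp only [houtput]
  refine (output.analyticOnNhd_comp_exp_smul _).finite_setOf_eq_zero_of_isCompact ?_ isCompact_Icc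
  exact fun hzero => hl0 <| hobs l0 fun k _ =>
    output.map_pow_eq_zero_of_forall_map_exp_smul_eq_zero (congrFun hzero) k

/-- **Outputs of an observable adjoint system vanish only finitely often.** Let the pair
`(−Aᵀ, C)` be observable, let `λ₀ ≠ 0`, and let `λ(t) = exp(−tAᵀ)λ₀` solve the adjoint
equation with output `z(t) = Cλ(t)`. Then for every `t_f > 0` the zero set
`{t ∈ [0, t_f] : z(t) = 0}` is finite. -/
theorem observable_adjoint_output_finite_zero_set {n q : ℕ}
    (A : Matrix (Fin n) (Fin n) ℝ) (C : Matrix (Fin q) (Fin n) ℝ)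
    (hobs : ∀ v : Fin n → ℝ, (∀ k : ℕ, k < n → C.mulVec (((-Aᵀ) ^ k).mulVec v) = 0) → v = 0)
    (l0 : Fin n → ℝ) (hl0 : l0 ≠ 0) (tf : ℝ) (htf : 0 < tf) :
    {t ∈ Set.Icc (0 : ℝ) tf |
      C.mulVec ((NormedSpace.exp ((-t) • Aᵀ)).mulVec l0) = 0}.Finite :=
  observable_adjoint_output_finite_zero_set_general A C hobs l0 hl0 tf
end

section
/- Let A ∈ ℝ^{n×n}, C ∈ ℝ^{q×n}, and x ∈ ℝ^n, and let t_f > 0. If C·exp(tA)·x = 0 for all t ∈ [0, t_f] and ⋂_{k=0}^{n−1} ker(C A^k) = {0}, then x = 0. -/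
/-!
The output `y(t) = C exp(tA) x` vanishes on `[0, t_f]`, and so do all its derivatives
`C A^k exp(tA) x`, since a function vanishing on an interval with nonempty interior has zero
derivative within it (even at the endpoints). Evaluating at `t = 0` puts `x` in every
`ker (C A^k)`, so observability gives `x = 0`.
-/

open Matrix

open Set NormedSpace in
theorem ContinuousLinearMap.map_pow_mul_exp_smul_eq_zero {𝔸 E : Type*} [NormedRing 𝔸]
    [NormedAlgebra ℝ 𝔸] [CompleteSpace 𝔸] [NormedAddCommGroup E] [NormedSpace ℝ E]
    (L : 𝔸 →L[ℝ] E) (a : 𝔸) {s : Set ℝ} (hs : UniqueDiffOn ℝ s)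
    (h : ∀ t ∈ s, L (exp (t • a)) = 0) (k : ℕ) : ∀ t ∈ s, L (a ^ k * exp (t • a)) = 0 := by
  induction k with
  | zero => simpa using h
  | succ k ih =>
    intro t ht
    have hderiv : HasDerivWithinAt (fun u : ℝ => L (a ^ k * exp (u • a)))
        (L (a ^ k * (a * exp (t • a)))) s t :=
      (L.hasFDerivAt.comp_hasDerivAt t
        ((hasDerivAt_exp_smul_const' a t).const_mul (a ^ k))).hasDerivWithinAt
    have hzero : HasDerivWithinAt (fun u : ℝ => L (a ^ k * exp (u • a))) 0 s t :=
      (hasDerivWithinAt_const t s 0).congr_of_mem ih ht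
    rw [pow_succ, mul_assoc]
    exact (hs t ht).eq_deriv s hderiv hzero

section

attribute [local instance] Matrix.linftyOpNormedRing Matrix.linftyOpNormedAlgebra

open Set NormedSpace in
theorem Matrix.mulVec_pow_mulVec_eq_zero_of_mulVec_exp_smul_eq_zero {m n : Type*} [Fintype m]
    [Fintype n] [DecidableEq n] (A : Matrix n n ℝ) (C : Matrix m n ℝ) (x : n → ℝ) {T : ℝ}
    (hT : 0 < T) (h : ∀ t ∈ Icc 0 T, C *ᵥ (exp (t • A) *ᵥ x) = 0) (k : ℕ) :
    C *ᵥ (A ^ k *ᵥ x) = 0 := by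
  let L : Matrix n n ℝ →L[ℝ] (m → ℝ) := LinearMap.toContinuousLinearMap
    (C.mulVecLin ∘ₗ LinearMap.applyₗ x ∘ₗ Matrix.toLin'.toLinearMap)
  have hL := L.map_pow_mul_exp_smul_eq_zero A (uniqueDiffOn_Icc hT) h k 0 ⟨le_rfl, hT.le⟩
  rwa [zero_smul, exp_zero, mul_one] at hL

end

/-- **Observability forces vanishing outputs to come from the zero state.** If
`C · exp(tA) · x = 0` for all `t ∈ [0, t_f]` (with `t_f > 0`) and the pair `(A, C)` is
observable (i.e. `⋂_{k<n} ker(C A^k) = {0}`), then `x = 0`. -/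
theorem observable_zero_output_implies_zero_state {n q : ℕ}
    (A : Matrix (Fin n) (Fin n) ℝ) (C : Matrix (Fin q) (Fin n) ℝ)
    (x : Fin n → ℝ) (tf : ℝ) (htf : 0 < tf)
    (hout : ∀ t ∈ Set.Icc (0 : ℝ) tf, C.mulVec ((NormedSpace.exp (t • A)).mulVec x) = 0)
    (hobs : ∀ v : Fin n → ℝ, (∀ k : ℕ, k < n → C.mulVec ((A ^ k).mulVec v) = 0) → v = 0) :
    x = 0 :=
  hobs x fun k _ => mulVec_pow_mulVec_eq_zero_of_mulVec_exp_smul_eq_zero A C x htf hout k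
end
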